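/- Let s ∈ (0,1), d ≥ 1, and let v, w be measurable functions on ℝ^d with w supported in the closed ball B(x₀, 3R/4). Suppose v, w ∈ L²(B(x₀,R)) and ∫_{B(x₀,R)^c} |v(y)| |y−x₀|^{−d−2s} dy < ∞. Then |∫_{B_R} ∫_{B_R^c} w(x)(v(x)−v(y)) |x−y|^{−d−2s} dy dx| ≤ C R^{−2s} (‖v‖²_{L²(B_R)} + ‖w‖²_{L²(B_R)}) + C R^{d+2s} (∫_{B_R^c} |v(y)| |y−x₀|^{−d−2s} dy)² , with C depending only on d and s. -/

import Mathlib

/-!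
For `x` in the support of `w` and `y ∉ B(x₀, R)` we have `|x - y| ≥ R/4` and `|y - x₀| ≤ 4 |x - y|`.
Splitting `v x - v y`, the `v x` part is bounded by `|v x| ∫_{|z| ≥ R/4} |z|^{-d-2s} dz`, which by
scaling is `(R/4)^{-2s}` times a constant, and the `v y` part by `4^{d+2s}` times the tail
`A = ∫_{B_Rᶜ} |v y| |y - x₀|^{-d-2s} dy`. Young's inequality with weights `R^{∓2s}` bounds
`|w x| (R^{-2s} |v x| + A)` by `R^{-2s} (v x² + w x²) + R^{2s} A²`, and integrating the constant
`R^{2s} A²` over `B_R` contributes the factor `|B_R| ≲ R^d`.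
-/

open MeasureTheory Metric Real Module
open scoped Pointwise

lemma compl_ball_subset_compl_ball_of_mem_closedBall {X : Type*} [PseudoMetricSpace X]
    {x₀ x : X} {R : ℝ} (hx : x ∈ closedBall x₀ (3 * R / 4)) :
    (ball x₀ R)ᶜ ⊆ (ball x (R / 4))ᶜ := by
  intro y hy
  simp only [Set.mem_compl_iff, mem_ball, not_lt, mem_closedBall] at hx hy ⊢
  linarith [dist_triangle y x x₀]

lemma norm_sub_rpow_neg_le_of_mem_closedBall {E : Type*} [NormedAddCommGroup E]
    {x₀ x y : E} {R K : ℝ} (hR : 0 < R) (hK : 0 ≤ K)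
    (hx : x ∈ closedBall x₀ (3 * R / 4)) (hy : y ∉ ball x₀ R) :
    ‖x - y‖ ^ (-K) ≤ 4 ^ K * ‖y - x₀‖ ^ (-K) := by
  rw [mem_closedBall, dist_eq_norm] at hx
  rw [mem_ball, dist_eq_norm, not_lt] at hy
  have hfar : ‖y - x₀‖ / 4 ≤ ‖x - y‖ := by
    linarith [norm_sub_le_norm_sub_add_norm_sub y x x₀, norm_sub_rev x y]
  calc ‖x - y‖ ^ (-K) ≤ (‖y - x₀‖ / 4) ^ (-K) :=
        rpow_le_rpow_of_nonpos (by linarith) hfar (neg_nonpos.2 hK)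
    _ = 4 ^ K * ‖y - x₀‖ ^ (-K) := by
        rw [div_rpow (norm_nonneg _) zero_le_four, rpow_neg zero_le_four, div_inv_eq_mul,
          mul_comm]

lemma norm_mul_sub_div_rpow_le {E : Type*} [NormedAddCommGroup E]
    {x₀ x y : E} {R K : ℝ} (hR : 0 < R) (hK : 0 ≤ K)
    (hx : x ∈ closedBall x₀ (3 * R / 4)) (hy : y ∉ ball x₀ R) (c : ℝ) (v : E → ℝ) :
    ‖c * (v x - v y) / ‖x - y‖ ^ K‖ ≤
      |c| * |v x| * ‖y - x‖ ^ (-K) + |c| * 4 ^ K * (|v y| * ‖y - x₀‖ ^ (-K)) := by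
  have hnear := norm_sub_rpow_neg_le_of_mem_closedBall hR hK hx hy
  rw [norm_div, norm_mul, norm_of_nonneg (rpow_nonneg (norm_nonneg _) _), div_eq_mul_inv,
    ← rpow_neg (norm_nonneg _), norm_sub_rev y x]
  simp only [norm_eq_abs]
  calc |c| * |v x - v y| * ‖x - y‖ ^ (-K)
      ≤ |c| * (|v x| + |v y|) * ‖x - y‖ ^ (-K) := by gcongr; exact abs_sub _ _
    _ = |c| * |v x| * ‖x - y‖ ^ (-K) + |c| * |v y| * ‖x - y‖ ^ (-K) := by ring
    _ ≤ |c| * |v x| * ‖x - y‖ ^ (-K) + |c| * |v y| * (4 ^ K * ‖y - x₀‖ ^ (-K)) := by gcongr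
    _ = _ := by ring

lemma abs_mul_add_le_young {α t : ℝ} (hα : 0 ≤ α) (ht : 0 < t) (p q β A : ℝ) :
    |p| * |q| * (α * t⁻¹) + |p| * β * A ≤
      (α + 1) * t⁻¹ * (q ^ 2 + p ^ 2) + β ^ 2 * t * A ^ 2 := by
  have hinv : 0 ≤ t⁻¹ := inv_nonneg.2 ht.le
  have hpq : |p| * |q| ≤ q ^ 2 + p ^ 2 := by
    nlinarith [sq_nonneg (|p| - |q|), sq_abs p, sq_abs q]
  have hpA : 2 * (|p| * β * A) ≤ t⁻¹ * p ^ 2 + β ^ 2 * t * A ^ 2 := by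
    have htt : t⁻¹ * t = 1 := inv_mul_cancel₀ ht.ne'
    nlinarith [mul_nonneg hinv (sq_nonneg (|p| - t * β * A)), sq_abs p]
  nlinarith [mul_le_mul_of_nonneg_left hpq (mul_nonneg hα hinv), mul_nonneg hinv (sq_nonneg q),
    mul_nonneg hinv (sq_nonneg p), mul_nonneg ht.le (sq_nonneg (β * A))]

section

variable {E : Type*} [NormedAddCommGroup E] [NormedSpace ℝ E] [FiniteDimensional ℝ E]
  [MeasurableSpace E] [BorelSpace E] (μ : Measure E) [μ.IsAddHaarMeasure]

lemma integrableOn_compl_ball_norm_sub_rpow_neg {K : ℝ} (hK : (finrank ℝ E : ℝ) < K)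
    (x : E) {a : ℝ} (ha : 0 < a) :
    IntegrableOn (fun y ↦ ‖y - x‖ ^ (-K)) (ball x a)ᶜ μ := by
  have hmaj : Integrable (fun y ↦ (a / (1 + a)) ^ (-K) * (1 + ‖y - x‖) ^ (-K)) μ :=
    ((integrable_one_add_norm hK).comp_sub_right x).const_mul _
  refine hmaj.integrableOn.mono' (Measurable.aestronglyMeasurable (by fun_prop)) ?_
  rw [ae_restrict_iff' measurableSet_ball.compl]
  refine .of_forall fun y hy ↦ ?_
  have hay : a ≤ ‖y - x‖ := by simpa [dist_eq_norm] using hy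
  rw [norm_of_nonneg (by positivity), ← mul_rpow (by positivity) (by positivity)]
  refine rpow_le_rpow_of_nonpos (by positivity) ?_ (neg_nonpos.2 ((Nat.cast_nonneg _).trans hK.le))
  rw [div_mul_eq_mul_div, div_le_iff₀ (by positivity)]
  nlinarith

lemma setIntegral_compl_ball_norm_sub_rpow_neg (K : ℝ) (x : E) {a : ℝ} (ha : 0 < a) :
    ∫ y in (ball x a)ᶜ, ‖y - x‖ ^ (-K) ∂μ =
      a ^ ((finrank ℝ E : ℝ) - K) * ∫ z in (ball 0 1)ᶜ, ‖z‖ ^ (-K) ∂μ := by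
  have htrans := (measurePreserving_add_right μ x).setIntegral_preimage_emb
    (MeasurableEquiv.addRight x).measurableEmbedding (fun y ↦ ‖y - x‖ ^ (-K)) (ball x a)ᶜ
  have hscale := Measure.setIntegral_comp_smul_of_pos μ (fun z : E ↦ ‖z‖ ^ (-K)) (ball 0 1)ᶜ ha
  have hpre : (· + x) ⁻¹' (ball x a)ᶜ = (ball (0 : E) a)ᶜ := by ext; simp
  have hdil : a • (ball (0 : E) 1)ᶜ = (ball 0 a)ᶜ := by
    ext z
    rw [Set.mem_smul_set_iff_inv_smul_mem₀ ha.ne']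
    simp [norm_smul, abs_of_pos ha, inv_mul_lt_iff₀ ha]
  rw [hdil] at hscale
  simp only [hpre, add_sub_cancel_right, norm_smul, norm_of_nonneg ha.le,
    mul_rpow ha.le (norm_nonneg _), integral_const_mul, smul_eq_mul] at htrans hscale
  rw [← htrans, rpow_sub ha, rpow_natCast]
  rw [rpow_neg ha.le] at hscale
  field_simp at hscale ⊢
  linear_combination -hscale

lemma abs_setIntegral_compl_ball_le {K : ℝ} (hK : (finrank ℝ E : ℝ) < K) {x₀ x : E} {R : ℝ}
    (hR : 0 < R) (hx : x ∈ closedBall x₀ (3 * R / 4)) (c : ℝ) {v : E → ℝ}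
    (htail : IntegrableOn (fun y ↦ |v y| * ‖y - x₀‖ ^ (-K)) (ball x₀ R)ᶜ μ) :
    |∫ y in (ball x₀ R)ᶜ, c * (v x - v y) / ‖x - y‖ ^ K ∂μ| ≤
      |c| * |v x| * ((R / 4) ^ ((finrank ℝ E : ℝ) - K) * ∫ z in (ball 0 1)ᶜ, ‖z‖ ^ (-K) ∂μ) +
        |c| * 4 ^ K * ∫ y in (ball x₀ R)ᶜ, |v y| * ‖y - x₀‖ ^ (-K) ∂μ := by
  have hK0 : 0 ≤ K := (Nat.cast_nonneg _).trans hK.le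
  have hsub := compl_ball_subset_compl_ball_of_mem_closedBall hx
  have hkernel : IntegrableOn (fun y ↦ ‖y - x‖ ^ (-K)) (ball x (R / 4))ᶜ μ :=
    integrableOn_compl_ball_norm_sub_rpow_neg μ hK x (by positivity)
  have hkernel_le : ∫ y in (ball x₀ R)ᶜ, ‖y - x‖ ^ (-K) ∂μ ≤
      (R / 4) ^ ((finrank ℝ E : ℝ) - K) * ∫ z in (ball 0 1)ᶜ, ‖z‖ ^ (-K) ∂μ := by
    rw [← setIntegral_compl_ball_norm_sub_rpow_neg μ K x (by positivity : 0 < R / 4)]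
    exact setIntegral_mono_set hkernel (.of_forall fun _ ↦ rpow_nonneg (norm_nonneg _) _)
      hsub.eventuallyLE
  rw [← norm_eq_abs]
  calc ‖∫ y in (ball x₀ R)ᶜ, c * (v x - v y) / ‖x - y‖ ^ K ∂μ‖
      ≤ ∫ y in (ball x₀ R)ᶜ, (|c| * |v x| * ‖y - x‖ ^ (-K)
          + |c| * 4 ^ K * (|v y| * ‖y - x₀‖ ^ (-K))) ∂μ := by
        refine norm_integral_le_of_norm_le
          (((hkernel.mono_set hsub).const_mul _).add (htail.const_mul _)) ?_
        rw [ae_restrict_iff' measurableSet_ball.compl]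
        exact .of_forall fun y hy ↦ norm_mul_sub_div_rpow_le hR hK0 hx hy c v
    _ = |c| * |v x| * ∫ y in (ball x₀ R)ᶜ, ‖y - x‖ ^ (-K) ∂μ
          + |c| * 4 ^ K * ∫ y in (ball x₀ R)ᶜ, |v y| * ‖y - x₀‖ ^ (-K) ∂μ := by
        rw [integral_add ((hkernel.mono_set hsub).const_mul _) (htail.const_mul _),
          integral_const_mul, integral_const_mul]
    _ ≤ _ := by gcongr

theorem abs_integral_ball_integral_compl_ball_le {K : ℝ} (hK : (finrank ℝ E : ℝ) < K)
    {x₀ : E} {R : ℝ} (hR : 0 < R) {v w : E → ℝ}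
    (hw : ∀ x, x ∉ closedBall x₀ (3 * R / 4) → w x = 0)
    (hv2 : MemLp v 2 (μ.restrict (ball x₀ R))) (hw2 : MemLp w 2 (μ.restrict (ball x₀ R)))
    (htail : IntegrableOn (fun y ↦ |v y| * ‖y - x₀‖ ^ (-K)) (ball x₀ R)ᶜ μ) :
    |∫ x in ball x₀ R, ∫ y in (ball x₀ R)ᶜ, w x * (v x - v y) / ‖x - y‖ ^ K ∂μ ∂μ| ≤
      (4 ^ (K - finrank ℝ E) * (∫ z in (ball 0 1)ᶜ, ‖z‖ ^ (-K) ∂μ) + 1) *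
          R ^ ((finrank ℝ E : ℝ) - K) *
          ((∫ x in ball x₀ R, v x ^ 2 ∂μ) + ∫ x in ball x₀ R, w x ^ 2 ∂μ) +
        (4 ^ K) ^ 2 * μ.real (ball 0 1) * R ^ K *
          (∫ y in (ball x₀ R)ᶜ, |v y| * ‖y - x₀‖ ^ (-K) ∂μ) ^ 2 := by
  set n : ℝ := (finrank ℝ E : ℝ)
  set c₁ := ∫ z in (ball (0 : E) 1)ᶜ, ‖z‖ ^ (-K) ∂μ
  set A := ∫ y in (ball x₀ R)ᶜ, |v y| * ‖y - x₀‖ ^ (-K) ∂μ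
  set α := 4 ^ (K - n) * c₁
  set t := R ^ (K - n)
  have ht : 0 < t := rpow_pos_of_pos hR _
  have hα : 0 ≤ α := mul_nonneg (by positivity)
    (setIntegral_nonneg measurableSet_ball.compl fun _ _ ↦ rpow_nonneg (norm_nonneg _) _)
  have hRt : R ^ (n - K) = t⁻¹ := by rw [← rpow_neg hR.le, neg_sub]
  have hpoint : ∀ x, ‖∫ y in (ball x₀ R)ᶜ, w x * (v x - v y) / ‖x - y‖ ^ K ∂μ‖ ≤
      (α + 1) * t⁻¹ * (v x ^ 2 + w x ^ 2) + (4 ^ K) ^ 2 * t * A ^ 2 := by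
    intro x
    by_cases hx : x ∈ closedBall x₀ (3 * R / 4)
    · have hscale : (R / 4) ^ (n - K) * c₁ = α * t⁻¹ := by
        rw [div_rpow hR.le zero_le_four, hRt, div_eq_mul_inv, ← rpow_neg zero_le_four, neg_sub]
        ring
      rw [norm_eq_abs]
      refine (abs_setIntegral_compl_ball_le μ hK hR hx (w x) htail).trans ?_
      rw [hscale]
      exact abs_mul_add_le_young hα ht _ _ _ _
    · simp only [hw x hx, zero_mul, zero_div, integral_zero, norm_zero]
      positivity
  have hball : μ.real (ball x₀ R) * t ≤ μ.real (ball 0 1) * R ^ K := by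
    calc μ.real (ball x₀ R) * t ≤ μ.real (closedBall x₀ R) * t :=
          mul_le_mul_of_nonneg_right
            (measureReal_mono ball_subset_closedBall measure_closedBall_lt_top.ne) ht.le
      _ = μ.real (ball 0 1) * R ^ K := by
          have hRK : R ^ n * t = R ^ K := by rw [← rpow_add hR, add_sub_cancel]
          rw [Measure.addHaar_real_closedBall μ x₀ hR.le, ← rpow_natCast]
          linear_combination μ.real (ball (0 : E) 1) * hRK
  have hsq : Integrable (fun x ↦ v x ^ 2 + w x ^ 2) (μ.restrict (ball x₀ R)) :=
    hv2.integrable_sq.add hw2.integrable_sq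
  have hconst : IntegrableOn (fun _ ↦ (4 ^ K) ^ 2 * t * A ^ 2) (ball x₀ R) μ :=
    integrableOn_const measure_ball_lt_top.ne
  have hmaj : Integrable (fun x ↦ (α + 1) * t⁻¹ * (v x ^ 2 + w x ^ 2) + (4 ^ K) ^ 2 * t * A ^ 2)
      (μ.restrict (ball x₀ R)) := (hsq.const_mul _).add hconst
  rw [← norm_eq_abs]
  refine (norm_integral_le_of_norm_le hmaj (.of_forall hpoint)).trans ?_
  rw [integral_add (hsq.const_mul _) hconst, integral_const_mul,
    integral_add hv2.integrable_sq hw2.integrable_sq, setIntegral_const, smul_eq_mul, hRt]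
  have hA : 0 ≤ (4 ^ K) ^ 2 * A ^ 2 := by positivity
  nlinarith [mul_le_mul_of_nonneg_right hball hA]

end

theorem stmt_17_general (d : ℕ) (s : ℝ) (hs : s ∈ Set.Ioo (0:ℝ) 1) :
    ∃ C : ℝ, 0 < C ∧ ∀ (x₀ : EuclideanSpace ℝ (Fin d)) (R : ℝ)
      (v w : EuclideanSpace ℝ (Fin d) → ℝ), 0 < R →
      Measurable v → Measurable w →
      (∀ x, x ∉ closedBall x₀ (3 * R / 4) → w x = 0) →
      MemLp v 2 (volume.restrict (ball x₀ R)) →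
      MemLp w 2 (volume.restrict (ball x₀ R)) →
      IntegrableOn (fun y => |v y| * ‖y - x₀‖ ^ (-(d:ℝ) - 2 * s)) (ball x₀ R)ᶜ →
      |∫ x in ball x₀ R, ∫ y in (ball x₀ R)ᶜ,
          w x * (v x - v y) / ‖x - y‖ ^ ((d:ℝ) + 2 * s)| ≤
        C * R ^ (-2 * s) *
            ((∫ x in ball x₀ R, (v x) ^ 2) + ∫ x in ball x₀ R, (w x) ^ 2) +
          C * R ^ ((d:ℝ) + 2 * s) *
            (∫ y in (ball x₀ R)ᶜ, |v y| * ‖y - x₀‖ ^ (-(d:ℝ) - 2 * s)) ^ 2 := by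
  set K : ℝ := d + 2 * s
  have hK : (finrank ℝ (EuclideanSpace ℝ (Fin d)) : ℝ) < K := by
    rw [finrank_euclideanSpace_fin]; linarith [hs.1]
  set C₁ : ℝ := 4 ^ (2 * s) * (∫ z in (ball (0 : EuclideanSpace ℝ (Fin d)) 1)ᶜ, ‖z‖ ^ (-K)) + 1
  set C₂ : ℝ := (4 ^ K) ^ 2 * volume.real (ball (0 : EuclideanSpace ℝ (Fin d)) 1)
  have hC₁ : 0 < C₁ := by
    have := setIntegral_nonneg (μ := volume) (s := (ball (0 : EuclideanSpace ℝ (Fin d)) 1)ᶜ)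
      measurableSet_ball.compl fun z _ ↦ rpow_nonneg (norm_nonneg z) (-K)
    positivity
  have hC₂ : 0 ≤ C₂ := by positivity
  refine ⟨C₁ + C₂, by positivity, fun x₀ R v w hR _ _ hw hv2 hw2 htail ↦ ?_⟩
  rw [show -(d : ℝ) - 2 * s = -K by ring] at htail ⊢
  have hbound := abs_integral_ball_integral_compl_ball_le volume hK hR hw hv2 hw2 htail
  rw [finrank_euclideanSpace_fin, show K - d = 2 * s by ring,
    show (d : ℝ) - K = -2 * s by ring] at hbound
  refine hbound.trans ?_
  gcongr ?_ * _ * _ + ?_ * _ * _ <;> linarith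

theorem stmt_17 (d : ℕ) (hd : 1 ≤ d) (s : ℝ) (hs : s ∈ Set.Ioo (0:ℝ) 1) :
    ∃ C : ℝ, 0 < C ∧ ∀ (x₀ : EuclideanSpace ℝ (Fin d)) (R : ℝ)
      (v w : EuclideanSpace ℝ (Fin d) → ℝ), 0 < R →
      Measurable v → Measurable w →
      (∀ x, x ∉ closedBall x₀ (3 * R / 4) → w x = 0) →
      MemLp v 2 (volume.restrict (ball x₀ R)) →
      MemLp w 2 (volume.restrict (ball x₀ R)) →
      IntegrableOn (fun y => |v y| * ‖y - x₀‖ ^ (-(d:ℝ) - 2 * s)) (ball x₀ R)ᶜ →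
      |∫ x in ball x₀ R, ∫ y in (ball x₀ R)ᶜ,
          w x * (v x - v y) / ‖x - y‖ ^ ((d:ℝ) + 2 * s)| ≤
        C * R ^ (-2 * s) *
            ((∫ x in ball x₀ R, (v x) ^ 2) + ∫ x in ball x₀ R, (w x) ^ 2) +
          C * R ^ ((d:ℝ) + 2 * s) *
            (∫ y in (ball x₀ R)ᶜ, |v y| * ‖y - x₀‖ ^ (-(d:ℝ) - 2 * s)) ^ 2 :=
  stmt_17_general d s hs
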